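/- Let α, β be closed smooth 1-forms on M. Then the numerator of sectional curvature is g(R(α♯,β♯)β♯,α♯) = R₁ + R₂ + R₃, where R₁ = (1/2)( α♯α♯(‖β‖²) − (α♯β♯ + β♯α♯)(g⁻¹(α,β)) + β♯β♯(‖α‖²) ), R₂ = (1/4)( ‖d(g⁻¹(α,β))‖² − g⁻¹( d(‖α‖²), d(‖β‖²) ) ), and R₃ = −(3/4)·g([α♯,β♯],[α♯,β♯]). Here α♯β♯(f) denotes the iterated directional derivative of the function f first along β♯ and then along α♯, and norms of 1-forms are taken with respect to g⁻¹. -/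

import Mathlib

/-!
Local-coordinate (chart) model of a Riemannian manifold: points are elements
of `ℝⁿ`, vector fields and 1-forms are given by their component functions on
an open set `U`, and the metric by its matrix of components.
-/

noncomputable section

namespace RG

/-- Points of the chart. -/
abbrev Pt (n : ℕ) : Type := Fin n → ℝ
/-- Vector fields, by components. -/
abbrev VF (n : ℕ) : Type := Pt n → Fin n → ℝ
/-- 1-forms, by components. -/
abbrev OneForm (n : ℕ) : Type := Pt n → Fin n → ℝ
/-- Metric tensors, by components. -/
abbrev Met (n : ℕ) : Type := Pt n → Matrix (Fin n) (Fin n) ℝ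

variable {n : ℕ}

/-- Partial derivative `∂ₛ f`. -/
def pd (s : Fin n) (f : Pt n → ℝ) : Pt n → ℝ := fun x => fderiv ℝ f x (Pi.single s 1)

/-- Directional derivative `X f` of a function along a vector field. -/
def dder (X : VF n) (f : Pt n → ℝ) : Pt n → ℝ := fun x => fderiv ℝ f x (X x)

/-- Lie bracket `[X, Y]` of vector fields. -/
def bracket (X Y : VF n) : VF n :=
  fun x k => fderiv ℝ (fun y => Y y k) x (X x) - fderiv ℝ (fun y => X y k) x (Y x)

/-- The inverse (co-)metric `g⁻¹`. -/
def ginv (g : Met n) : Met n := fun x => (g x)⁻¹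

/-- Pairing `α(X)` of a 1-form with a vector field. -/
def pairF (α : OneForm n) (X : VF n) : Pt n → ℝ := fun x => ∑ i, α x i * X x i

/-- Metric inner product `g(X,Y)` of vector fields. -/
def gV (g : Met n) (X Y : VF n) : Pt n → ℝ := fun x => ∑ i, ∑ j, g x i j * X x i * Y x j

/-- Co-metric inner product `g⁻¹(α,β)` of 1-forms. -/
def gF (g : Met n) (α β : OneForm n) : Pt n → ℝ :=
  fun x => ∑ i, ∑ j, ginv g x i j * α x i * β x j

/-- Raising indices: `α♯ = g⁻¹ α`. -/
def sharp (g : Met n) (α : OneForm n) : VF n := fun x k => ∑ i, ginv g x i k * α x i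

/-- Lowering indices: `X♭ = g X`. -/
def flat (g : Met n) (X : VF n) : OneForm n := fun x k => ∑ i, g x i k * X x i

/-- Differential `df` of a function, as a 1-form. -/
def dF (f : Pt n → ℝ) : OneForm n := fun x i => pd i f x

/-- Exterior derivative of a 1-form, evaluated on two vector fields:
`dα(X,Y) = Σ (∂ᵢα_j − ∂_jαᵢ) Xⁱ Y^j`. -/
def dOne (α : OneForm n) (X Y : VF n) : Pt n → ℝ :=
  fun x => ∑ i, ∑ j, (pd i (fun y => α y j) x - pd j (fun y => α y i) x) * X x i * Y x j

/-- Christoffel symbols `Γ^k_{ij}` of the Levi-Civita connection. -/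
def chr (g : Met n) (k i j : Fin n) : Pt n → ℝ :=
  fun x => (1/2) * ∑ l, ginv g x k l *
    (pd i (fun y => g y j l) x + pd j (fun y => g y i l) x - pd l (fun y => g y i j) x)

/-- Levi-Civita covariant derivative `∇_X Y` of a vector field. -/
def covV (g : Met n) (X Y : VF n) : VF n :=
  fun x k => fderiv ℝ (fun y => Y y k) x (X x) + ∑ i, ∑ j, chr g k i j x * X x i * Y x j

/-- Levi-Civita covariant derivative `∇_X α` of a 1-form, characterized by
`(∇_X α)(Y) = X(α(Y)) − α(∇_X Y)`. -/
def covF (g : Met n) (X : VF n) (α : OneForm n) : OneForm n :=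
  fun x j => fderiv ℝ (fun y => α y j) x (X x) - ∑ i, ∑ k, X x i * chr g k i j x * α x k

/-- Riemann curvature tensor `R(X,Y)Z = ∇_X∇_Y Z − ∇_Y∇_X Z − ∇_{[X,Y]}Z`. -/
def Rcurv (g : Met n) (X Y Z : VF n) : VF n :=
  covV g X (covV g Y Z) - covV g Y (covV g X Z) - covV g (bracket X Y) Z

/-- Lie derivative of a 1-form along a vector field. -/
def lieF (X : VF n) (α : OneForm n) : OneForm n :=
  fun x i => fderiv ℝ (fun y => α y i) x (X x) + ∑ s, α x s * pd i (fun y => X y s) x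

/-- Lie derivative of a contravariant 2-tensor (such as the co-metric `g⁻¹`). -/
def lieCo (X : VF n) (G : Met n) : Met n :=
  fun x => Matrix.of fun i j =>
    fderiv ℝ (fun y => G y i j) x (X x)
      - ∑ s, G x s j * pd s (fun y => X y i) x
      - ∑ s, G x i s * pd s (fun y => X y j) x

/-- Evaluation of a contravariant 2-tensor on a pair of 1-forms. -/
def evCo (G : Met n) (α β : OneForm n) : Pt n → ℝ :=
  fun x => ∑ i, ∑ j, G x i j * α x i * β x j

/-- Smoothness of (the components of) a 1-form or vector field on `U`. -/
def SmoothSec (U : Set (Pt n)) (ω : Pt n → Fin n → ℝ) : Prop :=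
  ∀ i, ContDiffOn ℝ (⊤ : ℕ∞) (fun y => ω y i) U

/-- Smoothness of the metric components on `U`. -/
def SmoothMet (U : Set (Pt n)) (g : Met n) : Prop :=
  ∀ i j, ContDiffOn ℝ (⊤ : ℕ∞) (fun y => g y i j) U

/-- `g` is a smooth Riemannian metric on `U`. -/
def IsRiemannOn (U : Set (Pt n)) (g : Met n) : Prop :=
  SmoothMet U g ∧ ∀ x ∈ U, (g x).IsSymm ∧ (g x).PosDef

/-- A 1-form is closed on `U`. -/
def IsClosedOn (U : Set (Pt n)) (α : OneForm n) : Prop :=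
  ∀ x ∈ U, ∀ i j, pd i (fun y => α y j) x = pd j (fun y => α y i) x

end RG
namespace RG

variable {n : ℕ} {U : Set (Pt n)} {g : Met n} {x : Pt n} {f h f₁ f₂ : Pt n → ℝ}
variable {X Y Z : VF n} {α β : OneForm n}

/-- Abbreviation for smooth scalar functions on `U`. -/
abbrev Sm (U : Set (Pt n)) (f : Pt n → ℝ) : Prop := ContDiffOn ℝ (⊤ : ℕ∞) f U

lemma sm_dAt (hU : IsOpen U) (hf : Sm U f) (hx : x ∈ U) : DifferentiableAt ℝ f x :=
  (hf.contDiffAt (hU.mem_nhds hx)).differentiableAt (by simp)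

lemma sm_pd (hU : IsOpen U) (hf : Sm U f) (i : Fin n) : Sm U (pd i f) := by
  have h1 : ContDiffOn ℝ (⊤ : ℕ∞) (fderiv ℝ f) U := hf.fderiv_of_isOpen hU (by simp)
  exact h1.clm_apply contDiffOn_const

lemma dv_sum {ι : Type*} (s : Finset ι) (F : ι → Pt n → ℝ)
    (h : ∀ i ∈ s, DifferentiableAt ℝ (F i) x) (v : Pt n) :
    fderiv ℝ (fun y => ∑ i ∈ s, F i y) x v = ∑ i ∈ s, fderiv ℝ (F i) x v := by
  rw [fderiv_fun_sum h]; simp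

lemma dv_mul (hf : DifferentiableAt ℝ f x) (hh : DifferentiableAt ℝ h x) (v : Pt n) :
    fderiv ℝ (fun y => f y * h y) x v = fderiv ℝ f x v * h x + f x * fderiv ℝ h x v := by
  rw [fderiv_fun_mul hf hh]; simp; ring

lemma dv_basis (v : Pt n) :
    fderiv ℝ f x v = ∑ s, v s * pd s f x := by
  have hv : v = ∑ s, v s • (Pi.single s 1 : Pt n) := by
    funext j
    rw [Finset.sum_apply]
    simp [Pi.single_apply]
  conv_lhs => rw [hv]
  rw [map_sum]
  simp [pd, smul_eq_mul]

lemma fderiv_congrOn (hU : IsOpen U) (hx : x ∈ U) (heq : Set.EqOn f₁ f₂ U) :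
    fderiv ℝ f₁ x = fderiv ℝ f₂ x :=
  Filter.EventuallyEq.fderiv_eq (Filter.eventuallyEq_of_mem (hU.mem_nhds hx) heq)

lemma pd_congrOn (hU : IsOpen U) (hx : x ∈ U) (heq : Set.EqOn f₁ f₂ U) (s : Fin n) :
    pd s f₁ x = pd s f₂ x := by
  unfold pd; rw [fderiv_congrOn hU hx heq]

lemma dder_congrOn (hU : IsOpen U) (hx : x ∈ U) (heq : Set.EqOn f₁ f₂ U) (X : VF n) :
    dder X f₁ x = dder X f₂ x := by
  unfold dder; rw [fderiv_congrOn hU hx heq]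

lemma pd_comm (hU : IsOpen U) (hx : x ∈ U) (hf : Sm U f) (s t : Fin n) :
    pd t (pd s f) x = pd s (pd t f) x := by
  have hAt : ContDiffAt ℝ (⊤ : ℕ∞) f x := hf.contDiffAt (hU.mem_nhds hx)
  have hd : DifferentiableAt ℝ (fderiv ℝ f) x :=
    (hAt.fderiv_right (m := (⊤ : ℕ∞)) (by simp)).differentiableAt (by simp)
  have hsymm := hAt.isSymmSndFDerivAt (by rw [minSmoothness_of_isRCLikeNormedField]; exact WithTop.coe_le_coe.mpr (le_top : (2:ℕ∞) ≤ ⊤))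
  have h1 : ∀ v w : Pt n, fderiv ℝ (fun y => fderiv ℝ f y v) x w
      = fderiv ℝ (fderiv ℝ f) x w v := by
    intro v w
    rw [fderiv_clm_apply hd (differentiableAt_const v)]
    simp
  unfold pd
  rw [h1, h1]
  exact hsymm _ _

/-! ### Basic pointwise facts about the metric -/

lemma gdet_ne (hg : IsRiemannOn U g) (hx : x ∈ U) : (g x).det ≠ 0 :=
  (hg.2 x hx).2.det_pos.ne'

lemma gsymm (hg : IsRiemannOn U g) (hx : x ∈ U) (i j : Fin n) : g x i j = g x j i :=
  (hg.2 x hx).1.apply j i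

lemma ginv_symm (hg : IsRiemannOn U g) (hx : x ∈ U) (i j : Fin n) :
    ginv g x i j = ginv g x j i := by
  have h1 : Matrix.transpose ((g x)⁻¹) = (g x)⁻¹ := by
    rw [Matrix.transpose_nonsing_inv, (hg.2 x hx).1.eq]
  have := congrFun (congrFun h1 j) i
  simpa [Matrix.transpose_apply, ginv] using this

lemma g_ginv (hg : IsRiemannOn U g) (hx : x ∈ U) (i j : Fin n) :
    ∑ k, g x i k * ginv g x k j = if i = j then 1 else 0 := by
  have h1 : g x * (g x)⁻¹ = 1 := Matrix.mul_nonsing_inv _ (gdet_ne hg hx).isUnit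
  have := congrFun (congrFun h1 i) j
  rw [Matrix.mul_apply] at this
  simpa [ginv, Matrix.one_apply] using this

lemma ginv_g (hg : IsRiemannOn U g) (hx : x ∈ U) (i j : Fin n) :
    ∑ k, ginv g x i k * g x k j = if i = j then 1 else 0 := by
  have h1 : (g x)⁻¹ * g x = 1 := Matrix.nonsing_inv_mul _ (gdet_ne hg hx).isUnit
  have := congrFun (congrFun h1 i) j
  rw [Matrix.mul_apply] at this
  simpa [ginv, Matrix.one_apply] using this

/-! ### Smoothness -/

lemma sm_det {M : Pt n → Matrix (Fin n) (Fin n) ℝ}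
    (h : ∀ i j, Sm U (fun y => M y i j)) : Sm U (fun y => (M y).det) := by
  simp only [Matrix.det_apply']
  exact ContDiffOn.sum fun σ _ =>
    (contDiffOn_const).mul (contDiffOn_prod fun i _ => h (σ i) i)

lemma sm_ginv (hg : IsRiemannOn U g) (i j : Fin n) :
    Sm U (fun y => ginv g y i j) := by
  have : (fun y => ginv g y i j) = fun y => ((g y).det)⁻¹ * (g y).adjugate i j := by
    funext y
    simp [ginv, Matrix.inv_def, Ring.inverse_eq_inv, Matrix.smul_apply, smul_eq_mul]
  rw [this]
  refine ContDiffOn.mul (ContDiffOn.inv (sm_det hg.1) (fun y hy => gdet_ne hg hy)) ?_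
  have : ∀ y : Pt n, (g y).adjugate i j = ((g y).updateRow j (Pi.single i 1)).det := fun y =>
    Matrix.adjugate_apply _ i j
  simp only [this]
  refine sm_det fun k l => ?_
  simp only [Matrix.updateRow_apply]
  by_cases hk : k = j <;> simp [hk]
  · exact contDiffOn_const
  · exact hg.1 k l

lemma sm_chr (hU : IsOpen U) (hg : IsRiemannOn U g) (k i j : Fin n) :
    Sm U (chr g k i j) := by
  unfold chr
  refine ContDiffOn.mul contDiffOn_const (ContDiffOn.sum fun l _ => ?_)
  exact (sm_ginv hg k l).mul
    (((sm_pd hU (hg.1 j l) i).add (sm_pd hU (hg.1 i l) j)).sub (sm_pd hU (hg.1 i j) l))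

lemma sm_dder (hU : IsOpen U) (hX : SmoothSec U X) (hf : Sm U f) : Sm U (dder X f) := by
  exact ContDiffOn.congr (ContDiffOn.sum fun s _ => (hX s).mul (sm_pd hU hf s))
    (fun y hy => dv_basis (X y))

lemma sm_sharp (hg : IsRiemannOn U g) (hα : SmoothSec U α) : SmoothSec U (sharp g α) :=
  fun k => ContDiffOn.sum fun i _ => (sm_ginv hg i k).mul (hα i)

lemma sm_covV (hU : IsOpen U) (hg : IsRiemannOn U g) (hX : SmoothSec U X)
    (hY : SmoothSec U Y) : SmoothSec U (covV g X Y) := by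
  intro k
  refine ContDiffOn.add (sm_dder hU hX (hY k)) ?_
  exact ContDiffOn.sum fun i _ => ContDiffOn.sum fun j _ =>
    ((sm_chr hU hg k i j).mul (hX i)).mul (hY j)

lemma sm_gF (hg : IsRiemannOn U g) (hα : SmoothSec U α) (hβ : SmoothSec U β) :
    Sm U (gF g α β) :=
  ContDiffOn.sum fun i _ => ContDiffOn.sum fun j _ => ((sm_ginv hg i j).mul (hα i)).mul (hβ j)

lemma sm_bracket (hU : IsOpen U) (hX : SmoothSec U X) (hY : SmoothSec U Y) :
    SmoothSec U (bracket X Y) := by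
  intro k
  exact ContDiffOn.sub (sm_dder hU hX (hY k)) (sm_dder hU hY (hX k))

lemma sm_dF (hU : IsOpen U) (hf : Sm U f) : SmoothSec U (dF f) :=
  fun i => sm_pd hU hf i

end RG
namespace RG
variable {n : ℕ} {U : Set (Pt n)} {g : Met n} {x : Pt n} {f h f₁ f₂ : Pt n → ℝ}
variable {X Y Z : VF n} {α β : OneForm n}

lemma pdg_symm (hU : IsOpen U) (hg : IsRiemannOn U g) (hx : x ∈ U) (s i j : Fin n) :
    pd s (fun y => g y i j) x = pd s (fun y => g y j i) x :=
  pd_congrOn hU hx (fun y hy => gsymm hg hy i j) s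

lemma chr_symm (hU : IsOpen U) (hg : IsRiemannOn U g) (hx : x ∈ U) (k i j : Fin n) :
    chr g k i j x = chr g k j i x := by
  unfold chr
  congr 1
  refine Finset.sum_congr rfl fun l _ => ?_
  rw [pdg_symm hU hg hx l i j]
  ring

lemma sum_gginv_delta (hg : IsRiemannOn U g) (hx : x ∈ U) (T : Fin n → ℝ) (j : Fin n) :
    ∑ l, (∑ k, g x k j * ginv g x k l) * T l = T j := by
  have h1 : ∀ l, ∑ k, g x k j * ginv g x k l = if j = l then 1 else 0 := fun l => by
    rw [← g_ginv hg hx j l]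
    exact Finset.sum_congr rfl fun k _ => by rw [gsymm hg hx k j]
  simp [h1]

lemma sum_gginv_delta' (hg : IsRiemannOn U g) (hx : x ∈ U) (T : Fin n → ℝ) (i : Fin n) :
    ∑ l, (∑ k, g x i k * ginv g x k l) * T l = T i := by
  have h1 : ∀ l, ∑ k, g x i k * ginv g x k l = if i = l then 1 else 0 := fun l =>
    g_ginv hg hx i l
  simp [h1]

lemma chr_contract (hg : IsRiemannOn U g) (hx : x ∈ U) (s i j : Fin n) :
    ∑ k, g x k j * chr g k s i x =
      (1/2) * (pd s (fun y => g y i j) x + pd i (fun y => g y s j) x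
        - pd j (fun y => g y s i) x) := by
  have e1 : ∑ k, g x k j * chr g k s i x
      = ∑ k, ∑ l, (g x k j * ginv g x k l) *
          ((1/2) * (pd s (fun y => g y i l) x + pd i (fun y => g y s l) x
            - pd l (fun y => g y s i) x)) := by
    refine Finset.sum_congr rfl fun k _ => ?_
    unfold chr
    simp only [Finset.mul_sum]
    refine Finset.sum_congr rfl fun l _ => by ring
  rw [e1, Finset.sum_comm]
  have e2 : ∀ l : Fin n, ∑ k, (g x k j * ginv g x k l) *
          ((1/2) * (pd s (fun y => g y i l) x + pd i (fun y => g y s l) x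
            - pd l (fun y => g y s i) x))
      = (∑ k, g x k j * ginv g x k l) *
          ((1/2) * (pd s (fun y => g y i l) x + pd i (fun y => g y s l) x
            - pd l (fun y => g y s i) x)) := fun l => (Finset.sum_mul _ _ _).symm
  simp only [e2]
  rw [sum_gginv_delta hg hx _ j]

lemma chr_contract' (hg : IsRiemannOn U g) (hx : x ∈ U) (s i j : Fin n) :
    ∑ k, g x i k * chr g k s j x =
      (1/2) * (pd s (fun y => g y j i) x + pd j (fun y => g y s i) x
        - pd i (fun y => g y s j) x) := by
  have e1 : ∑ k, g x i k * chr g k s j x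
      = ∑ k, ∑ l, (g x i k * ginv g x k l) *
          ((1/2) * (pd s (fun y => g y j l) x + pd j (fun y => g y s l) x
            - pd l (fun y => g y s j) x)) := by
    refine Finset.sum_congr rfl fun k _ => ?_
    unfold chr
    simp only [Finset.mul_sum]
    refine Finset.sum_congr rfl fun l _ => by ring
  rw [e1, Finset.sum_comm]
  have e2 : ∀ l : Fin n, ∑ k, (g x i k * ginv g x k l) *
          ((1/2) * (pd s (fun y => g y j l) x + pd j (fun y => g y s l) x
            - pd l (fun y => g y s j) x))
      = (∑ k, g x i k * ginv g x k l) *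
          ((1/2) * (pd s (fun y => g y j l) x + pd j (fun y => g y s l) x
            - pd l (fun y => g y s j) x)) := fun l => (Finset.sum_mul _ _ _).symm
  simp only [e2]
  rw [sum_gginv_delta' hg hx _ i]

/-- The Christoffel identity: `∂ₛ g_{ij} = Σ_k (g_{kj} Γ^k_{si} + g_{ik} Γ^k_{sj})`. -/
lemma chrid (hU : IsOpen U) (hg : IsRiemannOn U g) (hx : x ∈ U) (s i j : Fin n) :
    pd s (fun y => g y i j) x
      = ∑ k, (g x k j * chr g k s i x + g x i k * chr g k s j x) := by
  rw [Finset.sum_add_distrib, chr_contract hg hx s i j, chr_contract' hg hx s i j,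
    pdg_symm hU hg hx s j i]
  ring

end RG
namespace RG
variable {n : ℕ} {U : Set (Pt n)} {g : Met n} {x : Pt n} {f h f₁ f₂ : Pt n → ℝ}
variable {X Y Z : VF n} {α β : OneForm n}

lemma rev3 (G : Fin n → Fin n → Fin n → ℝ) :
    ∑ a, ∑ b, ∑ c, G a b c = ∑ c, ∑ b, ∑ a, G a b c := by
  calc ∑ a, ∑ b, ∑ c, G a b c
      = ∑ b, ∑ a, ∑ c, G a b c := Finset.sum_comm
    _ = ∑ b, ∑ c, ∑ a, G a b c := Finset.sum_congr rfl fun _ _ => Finset.sum_comm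
    _ = ∑ c, ∑ b, ∑ a, G a b c := Finset.sum_comm

lemma perm14 (F : Fin n → Fin n → Fin n → Fin n → ℝ) :
    ∑ a, ∑ b, ∑ c, ∑ d, F a b c d = ∑ d, ∑ b, ∑ c, ∑ a, F a b c d := by
  calc ∑ a, ∑ b, ∑ c, ∑ d, F a b c d
      = ∑ a, ∑ d, ∑ c, ∑ b, F a b c d :=
        Finset.sum_congr rfl fun a _ => rev3 (fun b c d => F a b c d)
    _ = ∑ d, ∑ a, ∑ c, ∑ b, F a b c d := Finset.sum_comm
    _ = ∑ d, ∑ a, ∑ b, ∑ c, F a b c d :=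
        Finset.sum_congr rfl fun d _ => Finset.sum_congr rfl fun a _ => Finset.sum_comm
    _ = ∑ d, ∑ b, ∑ a, ∑ c, F a b c d :=
        Finset.sum_congr rfl fun d _ => Finset.sum_comm
    _ = ∑ d, ∑ b, ∑ c, ∑ a, F a b c d :=
        Finset.sum_congr rfl fun d _ => Finset.sum_congr rfl fun b _ => Finset.sum_comm

lemma perm234 (F : Fin n → Fin n → Fin n → Fin n → ℝ) :
    ∑ a, ∑ b, ∑ c, ∑ d, F a b c d = ∑ a, ∑ d, ∑ c, ∑ b, F a b c d :=
  Finset.sum_congr rfl fun a _ => rev3 (fun b c d => F a b c d)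

lemma sum4_ext {F G : Fin n → Fin n → Fin n → Fin n → ℝ}
    (h : ∀ a b c d, F a b c d = G a b c d) :
    ∑ a, ∑ b, ∑ c, ∑ d, F a b c d = ∑ a, ∑ b, ∑ c, ∑ d, G a b c d :=
  Finset.sum_congr rfl fun a _ => Finset.sum_congr rfl fun b _ =>
    Finset.sum_congr rfl fun c _ => Finset.sum_congr rfl fun d _ => h a b c d

/-- Metric compatibility of the Levi-Civita connection, in coordinates. -/
lemma compat (hU : IsOpen U) (hg : IsRiemannOn U g) (hx : x ∈ U)
    (hY : SmoothSec U Y) (hZ : SmoothSec U Z) (X : VF n) :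
    dder X (gV g Y Z) x = gV g (covV g X Y) Z x + gV g Y (covV g X Z) x := by
  set v := X x with hv
  have dg : ∀ i j, DifferentiableAt ℝ (fun y => g y i j) x :=
    fun i j => sm_dAt hU (hg.1 i j) hx
  have dY : ∀ i, DifferentiableAt ℝ (fun y => Y y i) x := fun i => sm_dAt hU (hY i) hx
  have dZ : ∀ i, DifferentiableAt ℝ (fun y => Z y i) x := fun i => sm_dAt hU (hZ i) hx
  -- the four building blocks
  set T1 := ∑ i, ∑ j, ∑ s, ∑ k,
    v s * g x k j * chr g k s i x * Y x i * Z x j with hT1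
  set T2 := ∑ i, ∑ j, ∑ s, ∑ k,
    v s * g x i k * chr g k s j x * Y x i * Z x j with hT2
  set DYZ := ∑ i, ∑ j, g x i j * fderiv ℝ (fun y => Y y i) x v * Z x j with hDYZ
  set DZY := ∑ i, ∑ j, g x i j * Y x i * fderiv ℝ (fun y => Z y j) x v with hDZY
  have hL : dder X (gV g Y Z) x = (T1 + T2) + (DYZ + DZY) := by
    have e0 : dder X (gV g Y Z) x
        = ∑ i, ∑ j, (fderiv ℝ (fun y => g y i j) x v * Y x i * Z x j
            + g x i j * fderiv ℝ (fun y => Y y i) x v * Z x j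
            + g x i j * Y x i * fderiv ℝ (fun y => Z y j) x v) := by
      show fderiv ℝ (fun y => ∑ i, ∑ j, g y i j * Y y i * Z y j) x v = _
      rw [dv_sum _ _ (fun i _ => DifferentiableAt.fun_sum
        (fun j _ => ((dg i j).fun_mul (dY i)).fun_mul (dZ j))) v]
      refine Finset.sum_congr rfl fun i _ => ?_
      rw [dv_sum _ _ (fun j _ => ((dg i j).fun_mul (dY i)).fun_mul (dZ j)) v]
      refine Finset.sum_congr rfl fun j _ => ?_
      rw [dv_mul ((dg i j).fun_mul (dY i)) (dZ j) v, dv_mul (dg i j) (dY i) v]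
      ring
    rw [e0]
    have e1 : ∀ i j : Fin n, fderiv ℝ (fun y => g y i j) x v * Y x i * Z x j
        = (∑ s, ∑ k, v s * g x k j * chr g k s i x * Y x i * Z x j)
          + ∑ s, ∑ k, v s * g x i k * chr g k s j x * Y x i * Z x j := by
      intro i j
      rw [dv_basis v]
      have : ∀ s : Fin n, v s * pd s (fun y => g y i j) x
          = ∑ k, (v s * (g x k j * chr g k s i x) + v s * (g x i k * chr g k s j x)) := by
        intro s
        rw [chrid hU hg hx s i j, Finset.mul_sum]
        exact Finset.sum_congr rfl fun k _ => by ring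
      calc (∑ s, v s * pd s (fun y => g y i j) x) * Y x i * Z x j
          = ∑ s, ∑ k, (v s * (g x k j * chr g k s i x) * (Y x i * Z x j)
              + v s * (g x i k * chr g k s j x) * (Y x i * Z x j)) := by
            rw [Finset.sum_mul, Finset.sum_mul]
            refine Finset.sum_congr rfl fun s _ => ?_
            rw [this s, Finset.sum_mul, Finset.sum_mul]
            refine Finset.sum_congr rfl fun k _ => by ring
        _ = _ := by
            rw [← Finset.sum_add_distrib]
            refine Finset.sum_congr rfl fun s _ => ?_
            rw [← Finset.sum_add_distrib]
            refine Finset.sum_congr rfl fun k _ => by ring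
    calc ∑ i, ∑ j, (fderiv ℝ (fun y => g y i j) x v * Y x i * Z x j
            + g x i j * fderiv ℝ (fun y => Y y i) x v * Z x j
            + g x i j * Y x i * fderiv ℝ (fun y => Z y j) x v)
        = ∑ i, ∑ j, (((∑ s, ∑ k, v s * g x k j * chr g k s i x * Y x i * Z x j)
              + ∑ s, ∑ k, v s * g x i k * chr g k s j x * Y x i * Z x j)
            + (g x i j * fderiv ℝ (fun y => Y y i) x v * Z x j
              + g x i j * Y x i * fderiv ℝ (fun y => Z y j) x v)) := by
          refine Finset.sum_congr rfl fun i _ => Finset.sum_congr rfl fun j _ => ?_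
          rw [e1 i j]; ring
      _ = (T1 + T2) + (DYZ + DZY) := by
          simp only [Finset.sum_add_distrib, hT1, hT2, hDYZ, hDZY]
  have hR1 : gV g (covV g X Y) Z x = DYZ + T1 := by
    have e0 : gV g (covV g X Y) Z x
        = ∑ i, ∑ j, (g x i j * fderiv ℝ (fun y => Y y i) x v * Z x j
          + ∑ p, ∑ q, g x i j * chr g i p q x * v p * Y x q * Z x j) := by
      unfold gV covV
      refine Finset.sum_congr rfl fun i _ => Finset.sum_congr rfl fun j _ => ?_
      rw [← hv, mul_add, add_mul]
      congr 1
      rw [Finset.mul_sum, Finset.sum_mul]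
      refine Finset.sum_congr rfl fun p _ => ?_
      rw [Finset.mul_sum, Finset.sum_mul]
      exact Finset.sum_congr rfl fun q _ => by ring
    rw [e0]
    simp only [Finset.sum_add_distrib]
    congr 1
    calc ∑ i, ∑ j, ∑ p, ∑ q, g x i j * chr g i p q x * v p * Y x q * Z x j
        = ∑ q, ∑ j, ∑ p, ∑ i, g x i j * chr g i p q x * v p * Y x q * Z x j :=
          perm14 _
      _ = T1 := sum4_ext fun a b c d => by ring
  have hR2 : gV g Y (covV g X Z) x = DZY + T2 := by
    have e0 : gV g Y (covV g X Z) x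
        = ∑ i, ∑ j, (g x i j * Y x i * fderiv ℝ (fun y => Z y j) x v
          + ∑ p, ∑ q, g x i j * chr g j p q x * v p * Y x i * Z x q) := by
      unfold gV covV
      refine Finset.sum_congr rfl fun i _ => Finset.sum_congr rfl fun j _ => ?_
      rw [← hv, mul_add]
      congr 1
      rw [Finset.mul_sum]
      refine Finset.sum_congr rfl fun p _ => ?_
      rw [Finset.mul_sum]
      exact Finset.sum_congr rfl fun q _ => by ring
    rw [e0]
    simp only [Finset.sum_add_distrib]
    congr 1
    calc ∑ i, ∑ j, ∑ p, ∑ q, g x i j * chr g j p q x * v p * Y x i * Z x q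
        = ∑ i, ∑ q, ∑ p, ∑ j, g x i j * chr g j p q x * v p * Y x i * Z x q :=
          perm234 _
      _ = T2 := sum4_ext fun a b c d => by ring
  rw [hL, hR1, hR2]
  ring

end RG
namespace RG
variable {n : ℕ} {U : Set (Pt n)} {g : Met n} {x : Pt n} {f h f₁ f₂ : Pt n → ℝ}
variable {X Y Z : VF n} {α β : OneForm n}

lemma sum2_ext {F G : Fin n → Fin n → ℝ} (h : ∀ a b, F a b = G a b) :
    ∑ a, ∑ b, F a b = ∑ a, ∑ b, G a b :=
  Finset.sum_congr rfl fun a _ => Finset.sum_congr rfl fun b _ => h a b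

lemma sum3_ext {F G : Fin n → Fin n → Fin n → ℝ} (h : ∀ a b c, F a b c = G a b c) :
    ∑ a, ∑ b, ∑ c, F a b c = ∑ a, ∑ b, ∑ c, G a b c :=
  Finset.sum_congr rfl fun a _ => Finset.sum_congr rfl fun b _ =>
    Finset.sum_congr rfl fun c _ => h a b c

/-- Torsion-freeness: `∇_X Y = ∇_Y X + [X,Y]`. -/
lemma torsion (hU : IsOpen U) (hg : IsRiemannOn U g) (hx : x ∈ U) (X Y : VF n) (k : Fin n) :
    covV g X Y x k = covV g Y X x k + bracket X Y x k := by
  unfold covV bracket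
  have e : ∑ i, ∑ j, chr g k i j x * X x i * Y x j
      = ∑ i, ∑ j, chr g k i j x * Y x i * X x j := by
    calc ∑ i, ∑ j, chr g k i j x * X x i * Y x j
        = ∑ j, ∑ i, chr g k i j x * X x i * Y x j := Finset.sum_comm
      _ = ∑ i, ∑ j, chr g k i j x * Y x i * X x j :=
          sum2_ext fun a b => by rw [chr_symm hU hg hx k b a]; ring
  rw [e]; ring

lemma gV_sub_left (W₁ W₂ Z : VF n) :
    gV g (W₁ - W₂) Z x = gV g W₁ Z x - gV g W₂ Z x := by
  unfold gV
  rw [← Finset.sum_sub_distrib]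
  refine Finset.sum_congr rfl fun i _ => ?_
  rw [← Finset.sum_sub_distrib]
  refine Finset.sum_congr rfl fun j _ => ?_
  simp only [Pi.sub_apply]
  ring

lemma gV_symm (hg : IsRiemannOn U g) (hx : x ∈ U) (Y Z : VF n) :
    gV g Y Z x = gV g Z Y x := by
  unfold gV
  rw [Finset.sum_comm]
  exact sum2_ext fun a b => by rw [gsymm hg hx b a]; ring

lemma gV_sharp_pair (hg : IsRiemannOn U g) (hx : x ∈ U) (α : OneForm n) (Z : VF n) :
    gV g (sharp g α) Z x = pairF α Z x := by
  unfold gV sharp pairF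
  calc ∑ i, ∑ j, g x i j * (∑ k, ginv g x k i * α x k) * Z x j
      = ∑ i, ∑ j, ∑ k, ginv g x k i * g x i j * (α x k * Z x j) := by
        refine sum2_ext fun i j => ?_
        rw [Finset.mul_sum, Finset.sum_mul]
        exact Finset.sum_congr rfl fun k _ => by ring
    _ = ∑ k, ∑ j, ∑ i, ginv g x k i * g x i j * (α x k * Z x j) := by
        calc ∑ i, ∑ j, ∑ k, ginv g x k i * g x i j * (α x k * Z x j)
            = ∑ i, ∑ k, ∑ j, ginv g x k i * g x i j * (α x k * Z x j) :=
              Finset.sum_congr rfl fun _ _ => Finset.sum_comm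
          _ = ∑ k, ∑ i, ∑ j, ginv g x k i * g x i j * (α x k * Z x j) := Finset.sum_comm
          _ = ∑ k, ∑ j, ∑ i, ginv g x k i * g x i j * (α x k * Z x j) :=
              Finset.sum_congr rfl fun _ _ => Finset.sum_comm
    _ = ∑ k, ∑ j, (if k = j then (1:ℝ) else 0) * (α x k * Z x j) := by
        refine sum2_ext fun k j => ?_
        rw [← Finset.sum_mul, ginv_g hg hx k j]
    _ = ∑ k, α x k * Z x k := by simp
  
lemma gF_pair (hg : IsRiemannOn U g) (hx : x ∈ U) (α β : OneForm n) :
    gF g α β x = pairF α (sharp g β) x := by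
  unfold gF pairF sharp
  refine Finset.sum_congr rfl fun i _ => ?_
  rw [Finset.mul_sum]
  exact Finset.sum_congr rfl fun k _ => by rw [ginv_symm hg hx i k]; ring

lemma pair_dF (X : VF n) : pairF (dF f) X x = fderiv ℝ f x (X x) := by
  unfold pairF dF
  rw [dv_basis (X x)]
  exact Finset.sum_congr rfl fun i _ => by ring

/-- Coordinate formula for `g(∇_X α♯, Y)`. -/
lemma covsharp (hU : IsOpen U) (hg : IsRiemannOn U g) (hx : x ∈ U)
    (hα : SmoothSec U α) (hY : SmoothSec U Y) (X : VF n) :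
    gV g (covV g X (sharp g α)) Y x
      = (∑ i, ∑ j, pd i (fun y => α y j) x * X x i * Y x j)
        - ∑ i, ∑ j, ∑ k, chr g k i j x * α x k * X x i * Y x j := by
  have hA : SmoothSec U (sharp g α) := sm_sharp hg hα
  have hcmp := compat hU hg hx hA hY X
  have e1 : dder X (gV g (sharp g α) Y) x = dder X (pairF α Y) x :=
    dder_congrOn hU hx (fun y hy => gV_sharp_pair hg hy α Y) X
  have dα : ∀ j, DifferentiableAt ℝ (fun y => α y j) x := fun j => sm_dAt hU (hα j) hx
  have dY : ∀ j, DifferentiableAt ℝ (fun y => Y y j) x := fun j => sm_dAt hU (hY j) hx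
  have e2 : dder X (pairF α Y) x
      = ∑ j, (fderiv ℝ (fun y => α y j) x (X x) * Y x j
          + α x j * fderiv ℝ (fun y => Y y j) x (X x)) := by
    show fderiv ℝ (fun y => ∑ j, α y j * Y y j) x (X x) = _
    rw [dv_sum _ _ (fun j _ => (dα j).fun_mul (dY j)) (X x)]
    exact Finset.sum_congr rfl fun j _ => dv_mul (dα j) (dY j) (X x)
  have e3 : gV g (sharp g α) (covV g X Y) x = pairF α (covV g X Y) x :=
    gV_sharp_pair hg hx α _
  have e4 : pairF α (covV g X Y) x
      = ∑ j, (α x j * fderiv ℝ (fun y => Y y j) x (X x)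
          + α x j * ∑ i, ∑ k, chr g j i k x * X x i * Y x k) := by
    unfold pairF covV
    exact Finset.sum_congr rfl fun j _ => by ring
  have e5 : gV g (covV g X (sharp g α)) Y x
      = dder X (pairF α Y) x - pairF α (covV g X Y) x := by
    rw [← e1, ← e3]; linarith [hcmp]
  rw [e5, e2, e4]
  have e6 : ∑ j, (fderiv ℝ (fun y => α y j) x (X x) * Y x j
          + α x j * fderiv ℝ (fun y => Y y j) x (X x))
        - ∑ j, (α x j * fderiv ℝ (fun y => Y y j) x (X x)
          + α x j * ∑ i, ∑ k, chr g j i k x * X x i * Y x k)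
      = ∑ j, (fderiv ℝ (fun y => α y j) x (X x) * Y x j)
        - ∑ j, α x j * ∑ i, ∑ k, chr g j i k x * X x i * Y x k := by
    rw [Finset.sum_add_distrib, Finset.sum_add_distrib]; ring
  rw [e6]
  congr 1
  · calc ∑ j, fderiv ℝ (fun y => α y j) x (X x) * Y x j
        = ∑ j, ∑ i, X x i * pd i (fun y => α y j) x * Y x j := by
          refine Finset.sum_congr rfl fun j _ => ?_
          rw [dv_basis (X x), Finset.sum_mul]
      _ = ∑ i, ∑ j, pd i (fun y => α y j) x * X x i * Y x j := by
          rw [Finset.sum_comm]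
          exact sum2_ext fun a b => by ring
  · calc ∑ j, α x j * ∑ i, ∑ k, chr g j i k x * X x i * Y x k
        = ∑ j, ∑ i, ∑ k, chr g j i k x * α x j * X x i * Y x k := by
          refine Finset.sum_congr rfl fun j _ => ?_
          rw [Finset.mul_sum]
          refine Finset.sum_congr rfl fun i _ => ?_
          rw [Finset.mul_sum]
          exact Finset.sum_congr rfl fun k _ => by ring
      _ = ∑ i, ∑ j, ∑ k, chr g j i k x * α x j * X x i * Y x k := Finset.sum_comm
      _ = ∑ i, ∑ j, ∑ k, chr g k i j x * α x k * X x i * Y x j :=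
          Finset.sum_congr rfl fun i _ => Finset.sum_comm
  
/-- For a closed 1-form, `g(∇_X α♯, Y) = g(∇_Y α♯, X)`. -/
lemma covsharp_symm (hU : IsOpen U) (hg : IsRiemannOn U g) (hx : x ∈ U)
    (hα : SmoothSec U α) (hc : IsClosedOn U α)
    (hX : SmoothSec U X) (hY : SmoothSec U Y) :
    gV g (covV g X (sharp g α)) Y x = gV g (covV g Y (sharp g α)) X x := by
  rw [covsharp hU hg hx hα hY X, covsharp hU hg hx hα hX Y]
  congr 1
  · calc ∑ i, ∑ j, pd i (fun y => α y j) x * X x i * Y x j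
        = ∑ j, ∑ i, pd i (fun y => α y j) x * X x i * Y x j := Finset.sum_comm
      _ = ∑ i, ∑ j, pd i (fun y => α y j) x * Y x i * X x j :=
          sum2_ext fun a b => by rw [hc x hx b a]; ring
  · calc ∑ i, ∑ j, ∑ k, chr g k i j x * α x k * X x i * Y x j
        = ∑ j, ∑ i, ∑ k, chr g k i j x * α x k * X x i * Y x j := Finset.sum_comm
      _ = ∑ i, ∑ j, ∑ k, chr g k i j x * α x k * Y x i * X x j :=
          sum3_ext fun a b c => by rw [chr_symm hU hg hx c b a]; ring

end RG
namespace RG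
variable {n : ℕ} {U : Set (Pt n)} {g : Met n} {x : Pt n} {f h f₁ f₂ : Pt n → ℝ}
variable {X Y Z : VF n} {α β : OneForm n}

lemma dder_const_mul (hd : DifferentiableAt ℝ f x) (c : ℝ) (X : VF n) :
    dder X (fun y => c * f y) x = c * dder X f x := by
  unfold dder; rw [fderiv_const_mul hd c]; simp

lemma dder_sub (hd1 : DifferentiableAt ℝ f x) (hd2 : DifferentiableAt ℝ h x) (X : VF n) :
    dder X (fun y => f y - h y) x = dder X f x - dder X h x := by
  unfold dder; rw [fderiv_fun_sub hd1 hd2]; simp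

/-- `g(∇_{α♯} α♯, X) = (1/2) X(g⁻¹(α,α))` for closed `α`. -/
lemma P1 (hU : IsOpen U) (hg : IsRiemannOn U g) (hx : x ∈ U)
    (hα : SmoothSec U α) (hcα : IsClosedOn U α) (hX : SmoothSec U X) :
    gV g (covV g (sharp g α) (sharp g α)) X x = (1/2) * dder X (gF g α α) x := by
  have hA : SmoothSec U (sharp g α) := sm_sharp hg hα
  have hcmp := compat hU hg hx hA hA X
  have e1 : dder X (gF g α α) x = dder X (gV g (sharp g α) (sharp g α)) x :=
    dder_congrOn hU hx
      (fun y hy => (gF_pair hg hy α α).trans (gV_sharp_pair hg hy α _).symm) X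
  have e2 : gV g (covV g X (sharp g α)) (sharp g α) x
      = gV g (covV g (sharp g α) (sharp g α)) X x :=
    covsharp_symm hU hg hx hα hcα hX hA
  have e3 : gV g (sharp g α) (covV g X (sharp g α)) x
      = gV g (covV g X (sharp g α)) (sharp g α) x := gV_symm hg hx _ _
  rw [e1]
  linarith [hcmp]

/-- `g(∇_{β♯} α♯, X) + g(∇_{α♯} β♯, X) = X(g⁻¹(α,β))`. -/
lemma Psum (hU : IsOpen U) (hg : IsRiemannOn U g) (hx : x ∈ U)
    (hα : SmoothSec U α) (hβ : SmoothSec U β)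
    (hcα : IsClosedOn U α) (hcβ : IsClosedOn U β) (hX : SmoothSec U X) :
    gV g (covV g (sharp g β) (sharp g α)) X x
      + gV g (covV g (sharp g α) (sharp g β)) X x = dder X (gF g α β) x := by
  have hA : SmoothSec U (sharp g α) := sm_sharp hg hα
  have hB : SmoothSec U (sharp g β) := sm_sharp hg hβ
  have hcmp := compat hU hg hx hA hB X
  have e1 : dder X (gF g α β) x = dder X (gV g (sharp g α) (sharp g β)) x :=
    dder_congrOn hU hx
      (fun y hy => (gF_pair hg hy α β).trans (gV_sharp_pair hg hy α _).symm) X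
  have e2 : gV g (covV g X (sharp g α)) (sharp g β) x
      = gV g (covV g (sharp g β) (sharp g α)) X x :=
    covsharp_symm hU hg hx hα hcα hX hB
  have e3 : gV g (sharp g α) (covV g X (sharp g β)) x
      = gV g (covV g X (sharp g β)) (sharp g α) x := gV_symm hg hx _ _
  have e4 : gV g (covV g X (sharp g β)) (sharp g α) x
      = gV g (covV g (sharp g α) (sharp g β)) X x :=
    covsharp_symm hU hg hx hβ hcβ hX hA
  rw [e1]
  linarith [hcmp]

lemma Pdiff (hU : IsOpen U) (hg : IsRiemannOn U g) (hx : x ∈ U)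
    (α β : OneForm n) (X : VF n) :
    gV g (covV g (sharp g α) (sharp g β)) X x
      - gV g (covV g (sharp g β) (sharp g α)) X x
      = gV g (bracket (sharp g α) (sharp g β)) X x := by
  unfold gV
  rw [← Finset.sum_sub_distrib]
  refine Finset.sum_congr rfl fun i _ => ?_
  rw [← Finset.sum_sub_distrib]
  refine Finset.sum_congr rfl fun j _ => ?_
  rw [torsion hU hg hx (sharp g α) (sharp g β) i]
  ring

lemma covAB_eq (hU : IsOpen U) (hg : IsRiemannOn U g) (hx : x ∈ U)
    (hα : SmoothSec U α) (hβ : SmoothSec U β)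
    (hcα : IsClosedOn U α) (hcβ : IsClosedOn U β) (hX : SmoothSec U X) :
    gV g (covV g (sharp g α) (sharp g β)) X x
      = (1/2) * (dder X (gF g α β) x
          + gV g (bracket (sharp g α) (sharp g β)) X x) := by
  have h1 := Psum hU hg hx hα hβ hcα hcβ hX
  have h2 := Pdiff hU hg hx α β X
  linarith

lemma covBA_eq (hU : IsOpen U) (hg : IsRiemannOn U g) (hx : x ∈ U)
    (hα : SmoothSec U α) (hβ : SmoothSec U β)
    (hcα : IsClosedOn U α) (hcβ : IsClosedOn U β) (hX : SmoothSec U X) :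
    gV g (covV g (sharp g β) (sharp g α)) X x
      = (1/2) * (dder X (gF g α β) x
          - gV g (bracket (sharp g α) (sharp g β)) X x) := by
  have h1 := Psum hU hg hx hα hβ hcα hcβ hX
  have h2 := Pdiff hU hg hx α β X
  linarith

/-- `g(∇_{α♯} β♯, α♯) = α♯(g⁻¹(α,β)) − (1/2) β♯(g⁻¹(α,α))` for closed `α`. -/
lemma PABA (hU : IsOpen U) (hg : IsRiemannOn U g) (hx : x ∈ U)
    (hα : SmoothSec U α) (hβ : SmoothSec U β) (hcα : IsClosedOn U α) :
    gV g (covV g (sharp g α) (sharp g β)) (sharp g α) x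
      = dder (sharp g α) (gF g α β) x
        - (1/2) * dder (sharp g β) (gF g α α) x := by
  have hA : SmoothSec U (sharp g α) := sm_sharp hg hα
  have hB : SmoothSec U (sharp g β) := sm_sharp hg hβ
  have hcmp := compat hU hg hx hB hA (sharp g α)
  have e1 : dder (sharp g α) (gV g (sharp g β) (sharp g α)) x
      = dder (sharp g α) (gF g α β) x :=
    dder_congrOn hU hx (fun y hy => by
      rw [gV_symm hg hy, gV_sharp_pair hg hy α _, ← gF_pair hg hy α β]) _
  have e2 : gV g (sharp g β) (covV g (sharp g α) (sharp g α)) x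
      = gV g (covV g (sharp g α) (sharp g α)) (sharp g β) x := gV_symm hg hx _ _
  have e3 := P1 hU hg hx hα hcα hB
  linarith [hcmp]

/-- Directional derivative along a Lie bracket. -/
lemma dder_bracket (hU : IsOpen U) (hx : x ∈ U) (hf : Sm U f)
    (hX : SmoothSec U X) (hY : SmoothSec U Y) :
    dder (bracket X Y) f x = dder X (dder Y f) x - dder Y (dder X f) x := by
  have dX : ∀ s, DifferentiableAt ℝ (fun y => X y s) x := fun s => sm_dAt hU (hX s) hx
  have dY : ∀ s, DifferentiableAt ℝ (fun y => Y y s) x := fun s => sm_dAt hU (hY s) hx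
  have dpd : ∀ s, DifferentiableAt ℝ (pd s f) x := fun s => sm_dAt hU (sm_pd hU hf s) hx
  have eY : dder X (dder Y f) x
      = ∑ s, (fderiv ℝ (fun y => Y y s) x (X x) * pd s f x
          + Y x s * ∑ t, X x t * pd t (pd s f) x) := by
    have hEq : Set.EqOn (dder Y f) (fun y => ∑ s, Y y s * pd s f y) U :=
      fun y _ => dv_basis (Y y)
    show fderiv ℝ (dder Y f) x (X x) = _
    rw [fderiv_congrOn hU hx hEq,
      dv_sum _ _ (fun s _ => (dY s).fun_mul (dpd s)) (X x)]
    refine Finset.sum_congr rfl fun s _ => ?_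
    rw [dv_mul (dY s) (dpd s) (X x)]
    congr 1
    rw [dv_basis (X x)]
  have eX : dder Y (dder X f) x
      = ∑ s, (fderiv ℝ (fun y => X y s) x (Y x) * pd s f x
          + X x s * ∑ t, Y x t * pd t (pd s f) x) := by
    have hEq : Set.EqOn (dder X f) (fun y => ∑ s, X y s * pd s f y) U :=
      fun y _ => dv_basis (X y)
    show fderiv ℝ (dder X f) x (Y x) = _
    rw [fderiv_congrOn hU hx hEq,
      dv_sum _ _ (fun s _ => (dX s).fun_mul (dpd s)) (Y x)]
    refine Finset.sum_congr rfl fun s _ => ?_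
    rw [dv_mul (dX s) (dpd s) (Y x)]
    congr 1
    rw [dv_basis (Y x)]
  have eL : dder (bracket X Y) f x
      = (∑ s, fderiv ℝ (fun y => Y y s) x (X x) * pd s f x)
        - ∑ s, fderiv ℝ (fun y => X y s) x (Y x) * pd s f x := by
    show fderiv ℝ f x (bracket X Y x) = _
    rw [dv_basis (bracket X Y x), ← Finset.sum_sub_distrib]
    refine Finset.sum_congr rfl fun s _ => ?_
    unfold bracket
    ring
  have hSS : ∑ s, Y x s * ∑ t, X x t * pd t (pd s f) x
      = ∑ s, X x s * ∑ t, Y x t * pd t (pd s f) x := by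
    have l1 : ∑ s, Y x s * ∑ t, X x t * pd t (pd s f) x
        = ∑ s, ∑ t, Y x s * (X x t * pd t (pd s f) x) := by
      exact Finset.sum_congr rfl fun s _ => Finset.mul_sum _ _ _
    have l2 : ∑ s, X x s * ∑ t, Y x t * pd t (pd s f) x
        = ∑ s, ∑ t, X x s * (Y x t * pd t (pd s f) x) := by
      exact Finset.sum_congr rfl fun s _ => Finset.mul_sum _ _ _
    rw [l1, l2, Finset.sum_comm]
    refine sum2_ext fun a b => ?_
    rw [pd_comm hU hx hf a b]
    ring
  rw [eY, eX, eL, Finset.sum_add_distrib, Finset.sum_add_distrib]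
  linarith [hSS]

end RG

open RG

/-- **Mario's formula for the numerator of sectional curvature**: for closed smooth
1-forms `α β` on a Riemannian manifold, `g(R(α♯,β♯)β♯,α♯) = R₁ + R₂ + R₃`. -/
theorem mario_formula_sectional {n : ℕ} (U : Set (Pt n)) (hU : IsOpen U)
    (g : Met n) (hg : IsRiemannOn U g)
    (α β : OneForm n) (hα : SmoothSec U α) (hβ : SmoothSec U β)
    (hcα : IsClosedOn U α) (hcβ : IsClosedOn U β) :
    ∀ x ∈ U,
      gV g (Rcurv g (sharp g α) (sharp g β) (sharp g β)) (sharp g α) x =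
        (1/2) * ( dder (sharp g α) (dder (sharp g α) (gF g β β)) x
                  - ( dder (sharp g α) (dder (sharp g β) (gF g α β)) x
                      + dder (sharp g β) (dder (sharp g α) (gF g α β)) x )
                  + dder (sharp g β) (dder (sharp g β) (gF g α α)) x )
      + (1/4) * ( gF g (dF (gF g α β)) (dF (gF g α β)) x
                  - gF g (dF (gF g α α)) (dF (gF g β β)) x )
      + ( - (3/4) * gV g (bracket (sharp g α) (sharp g β)) (bracket (sharp g α) (sharp g β)) x ) := by
  intro x hx
  have hA : SmoothSec U (sharp g α) := sm_sharp hg hα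
  have hB : SmoothSec U (sharp g β) := sm_sharp hg hβ
  have hbr : SmoothSec U (bracket (sharp g α) (sharp g β)) := sm_bracket hU hA hB
  have hcovAA : SmoothSec U (covV g (sharp g α) (sharp g α)) := sm_covV hU hg hA hA
  have hcovBB : SmoothSec U (covV g (sharp g β) (sharp g β)) := sm_covV hU hg hB hB
  have hcovAB : SmoothSec U (covV g (sharp g α) (sharp g β)) := sm_covV hU hg hA hB
  have hcovBA : SmoothSec U (covV g (sharp g β) (sharp g α)) := sm_covV hU hg hB hA
  have hfaa : Sm U (gF g α α) := sm_gF hg hα hα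
  have hfbb : Sm U (gF g β β) := sm_gF hg hβ hβ
  have hfab : Sm U (gF g α β) := sm_gF hg hα hβ
  have hP : SmoothSec U (sharp g (dF (gF g α β))) := sm_sharp hg (sm_dF hU hfab)
  have hQ : SmoothSec U (sharp g (dF (gF g β β))) := sm_sharp hg (sm_dF hU hfbb)
  -- split the curvature tensor
  have hsplit : gV g (Rcurv g (sharp g α) (sharp g β) (sharp g β)) (sharp g α) x
      = gV g (covV g (sharp g α) (covV g (sharp g β) (sharp g β))) (sharp g α) x
        - gV g (covV g (sharp g β) (covV g (sharp g α) (sharp g β))) (sharp g α) x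
        - gV g (covV g (bracket (sharp g α) (sharp g β)) (sharp g β)) (sharp g α) x := by
    unfold Rcurv
    rw [gV_sub_left, gV_sub_left]
  -- Term 1
  have hT1 : gV g (covV g (sharp g α) (covV g (sharp g β) (sharp g β))) (sharp g α) x
      = (1/2) * dder (sharp g α) (dder (sharp g α) (gF g β β)) x
        - (1/4) * gF g (dF (gF g α α)) (dF (gF g β β)) x := by
    have hcmp := compat hU hg hx hcovBB hA (sharp g α)
    have e1 : dder (sharp g α) (gV g (covV g (sharp g β) (sharp g β)) (sharp g α)) x
        = (1/2) * dder (sharp g α) (dder (sharp g α) (gF g β β)) x := by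
      have hEq : Set.EqOn (gV g (covV g (sharp g β) (sharp g β)) (sharp g α))
          (fun y => (1/2) * dder (sharp g α) (gF g β β) y) U :=
        fun y hy => P1 hU hg hy hβ hcβ hA
      rw [dder_congrOn hU hx hEq (sharp g α),
        dder_const_mul (sm_dAt hU (sm_dder hU hA hfbb) hx) _ (sharp g α)]
    have s1 := P1 hU hg hx hβ hcβ hcovAA
    have s2 : dder (covV g (sharp g α) (sharp g α)) (gF g β β) x
        = pairF (dF (gF g β β)) (covV g (sharp g α) (sharp g α)) x := (pair_dF _).symm
    have s3 : pairF (dF (gF g β β)) (covV g (sharp g α) (sharp g α)) x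
        = gV g (sharp g (dF (gF g β β))) (covV g (sharp g α) (sharp g α)) x :=
      (gV_sharp_pair hg hx _ _).symm
    have s4 : gV g (sharp g (dF (gF g β β))) (covV g (sharp g α) (sharp g α)) x
        = gV g (covV g (sharp g α) (sharp g α)) (sharp g (dF (gF g β β))) x :=
      gV_symm hg hx _ _
    have s5 := P1 hU hg hx hα hcα hQ
    have s6 : dder (sharp g (dF (gF g β β))) (gF g α α) x
        = pairF (dF (gF g α α)) (sharp g (dF (gF g β β))) x := (pair_dF _).symm
    have s7 : pairF (dF (gF g α α)) (sharp g (dF (gF g β β))) x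
        = gF g (dF (gF g α α)) (dF (gF g β β)) x := (gF_pair hg hx _ _).symm
    have e2 : gV g (covV g (sharp g β) (sharp g β)) (covV g (sharp g α) (sharp g α)) x
        = (1/4) * gF g (dF (gF g α α)) (dF (gF g β β)) x := by
      linarith
    linarith [hcmp]
  -- Term 2
  have hT2 : gV g (covV g (sharp g β) (covV g (sharp g α) (sharp g β))) (sharp g α) x
      = (dder (sharp g β) (dder (sharp g α) (gF g α β)) x
          - (1/2) * dder (sharp g β) (dder (sharp g β) (gF g α α)) x)
        - (1/4) * (gF g (dF (gF g α β)) (dF (gF g α β)) x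
            - gV g (bracket (sharp g α) (sharp g β)) (bracket (sharp g α) (sharp g β)) x) := by
    have hcmp := compat hU hg hx hcovAB hA (sharp g β)
    have e1 : dder (sharp g β) (gV g (covV g (sharp g α) (sharp g β)) (sharp g α)) x
        = dder (sharp g β) (dder (sharp g α) (gF g α β)) x
          - (1/2) * dder (sharp g β) (dder (sharp g β) (gF g α α)) x := by
      have hEq : Set.EqOn (gV g (covV g (sharp g α) (sharp g β)) (sharp g α))
          (fun y => dder (sharp g α) (gF g α β) y
            - (1/2) * dder (sharp g β) (gF g α α) y) U :=
        fun y hy => PABA hU hg hy hα hβ hcα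
      rw [dder_congrOn hU hx hEq (sharp g β)]
      have d1 : DifferentiableAt ℝ (dder (sharp g α) (gF g α β)) x :=
        sm_dAt hU (sm_dder hU hA hfab) hx
      have d2 : DifferentiableAt ℝ (fun y => (1/2) * dder (sharp g β) (gF g α α) y) x :=
        (sm_dAt hU (sm_dder hU hB hfaa) hx).const_mul _
      rw [dder_sub d1 d2 (sharp g β),
        dder_const_mul (sm_dAt hU (sm_dder hU hB hfaa) hx) _ (sharp g β)]
    have w1 := covAB_eq hU hg hx hα hβ hcα hcβ hcovBA
    have w2 : dder (covV g (sharp g β) (sharp g α)) (gF g α β) x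
        = pairF (dF (gF g α β)) (covV g (sharp g β) (sharp g α)) x := (pair_dF _).symm
    have w3 : pairF (dF (gF g α β)) (covV g (sharp g β) (sharp g α)) x
        = gV g (sharp g (dF (gF g α β))) (covV g (sharp g β) (sharp g α)) x :=
      (gV_sharp_pair hg hx _ _).symm
    have w4 : gV g (sharp g (dF (gF g α β))) (covV g (sharp g β) (sharp g α)) x
        = gV g (covV g (sharp g β) (sharp g α)) (sharp g (dF (gF g α β))) x :=
      gV_symm hg hx _ _
    have w5 := covBA_eq hU hg hx hα hβ hcα hcβ hP
    have w6 : dder (sharp g (dF (gF g α β))) (gF g α β) x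
        = pairF (dF (gF g α β)) (sharp g (dF (gF g α β))) x := (pair_dF _).symm
    have w7 : pairF (dF (gF g α β)) (sharp g (dF (gF g α β))) x
        = gF g (dF (gF g α β)) (dF (gF g α β)) x := (gF_pair hg hx _ _).symm
    have w8 : gV g (bracket (sharp g α) (sharp g β)) (covV g (sharp g β) (sharp g α)) x
        = gV g (covV g (sharp g β) (sharp g α)) (bracket (sharp g α) (sharp g β)) x :=
      gV_symm hg hx _ _
    have w9 := covBA_eq hU hg hx hα hβ hcα hcβ hbr
    have w10 : dder (bracket (sharp g α) (sharp g β)) (gF g α β) x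
        = pairF (dF (gF g α β)) (bracket (sharp g α) (sharp g β)) x := (pair_dF _).symm
    have w11 : pairF (dF (gF g α β)) (bracket (sharp g α) (sharp g β)) x
        = gV g (sharp g (dF (gF g α β))) (bracket (sharp g α) (sharp g β)) x :=
      (gV_sharp_pair hg hx _ _).symm
    have w12 : gV g (sharp g (dF (gF g α β))) (bracket (sharp g α) (sharp g β)) x
        = gV g (bracket (sharp g α) (sharp g β)) (sharp g (dF (gF g α β))) x :=
      gV_symm hg hx _ _
    linarith [hcmp]
  -- Term 3
  have hT3 : gV g (covV g (bracket (sharp g α) (sharp g β)) (sharp g β)) (sharp g α) x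
      = (1/2) * (dder (bracket (sharp g α) (sharp g β)) (gF g α β) x
          + gV g (bracket (sharp g α) (sharp g β)) (bracket (sharp g α) (sharp g β)) x) := by
    have e1 : gV g (covV g (bracket (sharp g α) (sharp g β)) (sharp g β)) (sharp g α) x
        = gV g (covV g (sharp g α) (sharp g β)) (bracket (sharp g α) (sharp g β)) x :=
      covsharp_symm hU hg hx hβ hcβ hbr hA
    have e2 := covAB_eq hU hg hx hα hβ hcα hcβ hbr
    linarith
  have hm := dder_bracket hU hx hfab hA hB
  linarith [hsplit, hT1, hT2, hT3, hm]
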